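/- Let A be a finite alphabet, f₁ : A → A, f₂ : A × A → A, and let C ⊆ A³ be unambiguous for the Diamond Network. Then for every x ∈ C, the set Ω₂(x) = {(f₁(x₁'), f₂(x₂,x₃)) : x₁' ∈ A} has cardinality at least |C|. -/

import Mathlib

open Finset

/-- Hamming distance on triples. -/
def dH3 {A : Type*} [DecidableEq A] (x y : A × A × A) : ℕ :=
  (if x.1 = y.1 then 0 else 1) + (if x.2.1 = y.2.1 then 0 else 1) +
    (if x.2.2 = y.2.2 then 0 else 1)

/-- The set of possible outputs at the terminal of the Diamond Network. -/
def Omega {A : Type*} [Fintype A] [DecidableEq A] (f₁ : A → A) (f₂ : A → A → A)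
    (x : A × A × A) : Finset (A × A) :=
  (Finset.univ.filter fun x' : A × A × A => dH3 x' x ≤ 1).image
    fun x' => (f₁ x'.1, f₂ x'.2.1 x'.2.2)

/-- An outer code is unambiguous if output sets of distinct codewords are disjoint. -/
def Unambiguous {A : Type*} [Fintype A] [DecidableEq A] (f₁ : A → A) (f₂ : A → A → A)
    (C : Finset (A × A × A)) : Prop :=
  ∀ x ∈ C, ∀ y ∈ C, x ≠ y → Disjoint (Omega f₁ f₂ x) (Omega f₁ f₂ y)

lemma dH3_le_one_of_fst_eq {A : Type*} [DecidableEq A] {x y : A × A × A}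
    (h₁ : x.1 = y.1) (h : x.2.1 = y.2.1 ∨ x.2.2 = y.2.2) : dH3 x y ≤ 1 := by
  unfold dH3
  rcases h with h | h <;> split_ifs <;> simp_all

lemma mem_Omega_of_dH3_le_one {A : Type*} [Fintype A] [DecidableEq A] (f₁ : A → A)
    (f₂ : A → A → A) {x x' : A × A × A} (h : dH3 x' x ≤ 1) :
    (f₁ x'.1, f₂ x'.2.1 x'.2.2) ∈ Omega f₁ f₂ x :=
  mem_image.2 ⟨x', mem_filter.2 ⟨mem_univ _, h⟩, rfl⟩

/-- If `f₁ y₁ = f₁ z₁`, the terminal output `(f₁ y₁, f₂ z₂ y₃)` is reachable from `y` (corrupt its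
second symbol) and from `z` (corrupt its third symbol). -/
lemma Unambiguous.injOn_fst {A : Type*} [Fintype A] [DecidableEq A] {f₁ : A → A}
    {f₂ : A → A → A} {C : Finset (A × A × A)} (hC : Unambiguous f₁ f₂ C) :
    Set.InjOn (fun y : A × A × A => f₁ y.1) C := by
  intro y hy z hz hf
  by_contra hne
  have hy' : (f₁ y.1, f₂ z.2.1 y.2.2) ∈ Omega f₁ f₂ y :=
    mem_Omega_of_dH3_le_one f₁ f₂ (x' := (y.1, z.2.1, y.2.2))
      (dH3_le_one_of_fst_eq rfl (.inr rfl))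
  have hz' : (f₁ z.1, f₂ z.2.1 y.2.2) ∈ Omega f₁ f₂ z :=
    mem_Omega_of_dH3_le_one f₁ f₂ (x' := (z.1, z.2.1, y.2.2))
      (dH3_le_one_of_fst_eq rfl (.inl rfl))
  rw [← show f₁ y.1 = f₁ z.1 from hf] at hz'
  exact disjoint_left.1 (hC y hy z hz hne) hy' hz'

theorem stmt14 {A : Type*} [Fintype A] [DecidableEq A]
    (f₁ : A → A) (f₂ : A → A → A) (C : Finset (A × A × A))
    (hC : Unambiguous f₁ f₂ C) :
    ∀ x ∈ C, C.card ≤ (Finset.univ.image fun b => (f₁ b, f₂ x.2.1 x.2.2)).card := by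
  intro x _
  refine card_le_card_of_injOn (fun y => (f₁ y.1, f₂ x.2.1 x.2.2))
    (fun y _ => mem_image_of_mem _ (mem_univ y.1)) ?_
  intro y hy z hz h
  exact hC.injOn_fst hy hz (Prod.ext_iff.1 h).1
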